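/- arXiv:1607.07977 — 8 statements merged into one kernel-verified Lean document; each statement's English description precedes it below -/
import Mathlib

section
/- For the Suslov system with zero external field (b = 0), the density ρ(ω₁, ω₂, γ) = (I₁₃ω₁ + I₂₃ω₂)⁻¹ defines an invariant measure: the vector field v of the system satisfies the Liouville equation div(ρv) = 0 on the open set where I₁₃ω₁ + I₂₃ω₂ ≠ 0. -/
/-!
By the product rule, `div (g⁻¹ v) = g⁻¹ div v - g⁻² dg(v)`, so `g⁻¹` is an invariant density as
soon as `dg(v) = g · div v`. For the Suslov field and `g = I₁₃ω₁ + I₂₃ω₂`, the first two equations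
give `g' = I₁₃ω₁' + I₂₃ω₂' = g · (I₂₃ω₁/I₂₂ - I₁₃ω₂/I₁₁)`, and this factor is exactly `div v`.
-/

open ContinuousLinearMap

noncomputable def divergence {ι : Type*} [Fintype ι] [DecidableEq ι]
    (v : (ι → ℝ) → ι → ℝ) (x : ι → ℝ) : ℝ :=
  ∑ i, fderiv ℝ (fun y => v y i) x (Pi.single i 1)

theorem fderiv_eval_eq_proj {𝕜 ι : Type*} [NontriviallyNormedField 𝕜] [Fintype ι] (i : ι)
    (x : ι → 𝕜) : fderiv 𝕜 (fun y : ι → 𝕜 => y i) x = proj i :=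
  (hasFDerivAt_apply i x).fderiv

section Divergence

variable {ι : Type*} [Fintype ι] [DecidableEq ι]

theorem ContinuousLinearMap.apply_eq_sum_mul_apply_single (ℓ : (ι → ℝ) →L[ℝ] ℝ) (w : ι → ℝ) :
    ℓ w = ∑ i, w i * ℓ (Pi.single i 1) := by
  conv_lhs => rw [← Finset.univ_sum_single w]
  refine (map_sum ℓ _ _).trans (Finset.sum_congr rfl fun i _ => ?_)
  rw [← smul_eq_mul, ← map_smul, ← Pi.single_smul, smul_eq_mul, mul_one]

theorem divergence_smul {ρ : (ι → ℝ) → ℝ} {v : (ι → ℝ) → ι → ℝ} {x : ι → ℝ}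
    (hρ : DifferentiableAt ℝ ρ x) (hv : DifferentiableAt ℝ v x) :
    divergence (fun y => ρ y • v y) x = ρ x * divergence v x + fderiv ℝ ρ x (v x) := by
  rw [divergence, divergence, (fderiv ℝ ρ x).apply_eq_sum_mul_apply_single, Finset.mul_sum,
    ← Finset.sum_add_distrib]
  refine Finset.sum_congr rfl fun i _ => ?_
  simp only [Pi.smul_apply, smul_eq_mul]
  rw [fderiv_fun_mul hρ (differentiableAt_pi.1 hv i)]
  simp only [add_apply, FunLike.coe_smul, Pi.smul_apply, smul_eq_mul]

/-- `g` is a Jacobi last multiplier of `v`. -/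
theorem divergence_inv_smul_eq_zero {g : (ι → ℝ) → ℝ} {v : (ι → ℝ) → ι → ℝ} {x : ι → ℝ}
    (hg : DifferentiableAt ℝ g x) (hgx : g x ≠ 0) (hv : DifferentiableAt ℝ v x)
    (hgv : fderiv ℝ g x (v x) = g x * divergence v x) :
    divergence (fun y => (g y)⁻¹ • v y) x = 0 := by
  have hinv : HasFDerivAt (fun y => (g y)⁻¹) ((-(g x ^ 2)⁻¹) • fderiv ℝ g x) x :=
    (hasDerivAt_inv hgx).comp_hasFDerivAt x hg.hasFDerivAt
  rw [divergence_smul (hg.fun_inv hgx) hv, hinv.fderiv, smul_apply, hgv, smul_eq_mul]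
  field_simp
  ring

end Divergence

section Suslov

variable (I11 I22 I13 I23 : ℝ)

/-- In the coordinates `x = (ω₁, ω₂, γ₁, γ₂, γ₃)`. -/
noncomputable def suslovField (x : Fin 5 → ℝ) : Fin 5 → ℝ :=
  ![-x 1 * (I13 * x 0 + I23 * x 1) / I11,
    x 0 * (I13 * x 0 + I23 * x 1) / I22,
    -x 4 * x 1,
    x 4 * x 0,
    x 2 * x 1 - x 3 * x 0]

theorem differentiable_suslovField : Differentiable ℝ (suslovField I11 I22 I13 I23) := by
  refine differentiable_pi.2 fun i => ?_
  fin_cases i <;>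
    simp only [suslovField, Fin.zero_eta, Fin.mk_one, Fin.reduceFinMk, Matrix.cons_val_zero,
      Matrix.cons_val_one, Matrix.cons_val] <;>
    fun_prop

theorem divergence_suslovField (x : Fin 5 → ℝ) :
    divergence (suslovField I11 I22 I13 I23) x = I23 * x 0 / I22 - I13 * x 1 / I11 := by
  simp only [divergence, suslovField, Fin.sum_univ_five, Fin.isValue, Matrix.cons_val_zero,
    Matrix.cons_val_one, Matrix.cons_val, div_eq_mul_inv]
  simp (disch := fun_prop) only [fderiv_fun_mul, fderiv_fun_add, fderiv_fun_sub, fderiv_fun_neg,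
    fderiv_fun_const, fderiv_eval_eq_proj]
  simp only [add_apply, sub_apply, neg_apply, smul_apply, zero_apply, proj_apply, smul_eq_mul,
    Pi.single_apply, Pi.zero_apply, Fin.isValue, Fin.reduceEq, ↓reduceIte]
  ring

theorem fderiv_multiplier_apply_suslovField (x : Fin 5 → ℝ) :
    fderiv ℝ (fun y : Fin 5 → ℝ => I13 * y 0 + I23 * y 1) x (suslovField I11 I22 I13 I23 x) =
      (I13 * x 0 + I23 * x 1) * divergence (suslovField I11 I22 I13 I23) x := by
  simp (disch := fun_prop) only [fderiv_fun_add, fderiv_const_mul, fderiv_eval_eq_proj]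
  simp only [add_apply, smul_apply, proj_apply, smul_eq_mul, divergence_suslovField, suslovField,
    Matrix.cons_val_zero, Matrix.cons_val_one]
  ring

end Suslov

theorem suslov_singular_invariant_measure_general
    (I11 I22 I13 I23 : ℝ)
    (v : (Fin 5 → ℝ) → (Fin 5 → ℝ))
    (hv : v = fun x => ![-x 1 * (I13 * x 0 + I23 * x 1) / I11,
                          x 0 * (I13 * x 0 + I23 * x 1) / I22,
                          -x 4 * x 1,
                          x 4 * x 0,
                          x 2 * x 1 - x 3 * x 0])
    (ρ : (Fin 5 → ℝ) → ℝ)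
    (hρ : ρ = fun x => (I13 * x 0 + I23 * x 1)⁻¹) :
    ∀ x : Fin 5 → ℝ, I13 * x 0 + I23 * x 1 ≠ 0 →
      ∑ i, fderiv ℝ (fun y => ρ y * v y i) x (Pi.single i 1) = 0 := by
  subst hv hρ
  intro x hx
  exact divergence_inv_smul_eq_zero (by fun_prop) hx
    (differentiable_suslovField I11 I22 I13 I23 x) (fderiv_multiplier_apply_suslovField I11 I22 I13 I23 x)

/-- For the Suslov system with `b = 0`, the density `ρ = (I₁₃ω₁ + I₂₃ω₂)⁻¹`
satisfies the Liouville equation `div(ρ v) = 0` where `I₁₃ω₁ + I₂₃ω₂ ≠ 0`. -/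
theorem suslov_singular_invariant_measure
    (I11 I22 I13 I23 : ℝ) (hI11 : 0 < I11) (hI22 : 0 < I22)
    (hI : ¬(I13 = 0 ∧ I23 = 0))
    (v : (Fin 5 → ℝ) → (Fin 5 → ℝ))
    (hv : v = fun x => ![-x 1 * (I13 * x 0 + I23 * x 1) / I11,
                          x 0 * (I13 * x 0 + I23 * x 1) / I22,
                          -x 4 * x 1,
                          x 4 * x 0,
                          x 2 * x 1 - x 3 * x 0])
    (ρ : (Fin 5 → ℝ) → ℝ)
    (hρ : ρ = fun x => (I13 * x 0 + I23 * x 1)⁻¹) :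
    ∀ x : Fin 5 → ℝ, I13 * x 0 + I23 * x 1 ≠ 0 →
      ∑ i, fderiv ℝ (fun y => ρ y * v y i) x (Pi.single i 1) = 0 :=
  suslov_singular_invariant_measure_general I11 I22 I13 I23 v hv ρ hρ
end

section
/- The explicit functions ω₁(t) = ω₀ (√I₁₁ I₂₂ / (I₂₂I₁₃² + I₁₁I₂₃²)) · (2√I₂₂ I₁₃ − √I₁₁ I₂₃ (e^u − e^{−u}))/(e^u + e^{−u}) and ω₂(t) = ω₀ (I₁₁√I₂₂ / (I₂₂I₁₃² + I₁₁I₂₃²)) · (2√I₁₁ I₂₃ + √I₂₂ I₁₃ (e^u − e^{−u}))/(e^u + e^{−u}), with u = ω₀(t − t₀), solve the reduced Suslov equations I₁₁ω₁' = −ω₂(I₁₃ω₁ + I₂₃ω₂), I₂₂ω₂' = ω₁(I₁₃ω₁ + I₂₃ω₂). -/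
/-!
With `a = √I₁₁`, `b = √I₂₂`, `P = b I₁₃`, `Q = a I₂₃` and `u = ω₀ (t - t₀)`, the formulas read
`ω₁ = c b x(u)`, `ω₂ = c a y(u)` with `c = ω₀ a b / (P² + Q²)`, where
`x = (P - Q sinh) / cosh` and `y = (Q + P sinh) / cosh`. The pair `(x, y)` rotates with angular
velocity `1 / cosh`, and `P x + Q y = (P² + Q²) / cosh`, so that `I₁₃ ω₁ + I₂₃ ω₂ = ω₀ a b / cosh u`
is exactly the factor that turns the rotation equations into the reduced Suslov system.
-/

open Real

theorem HasDerivAt.comp_mul_sub_const {f : ℝ → ℝ} {f' ω0 t0 t : ℝ}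
    (hf : HasDerivAt f f' (ω0 * (t - t0))) :
    HasDerivAt (fun t => f (ω0 * (t - t0))) (f' * ω0) t := by
  have hu : HasDerivAt (fun t => ω0 * (t - t0)) ω0 t := by
    simpa using ((hasDerivAt_id t).sub_const t0).const_mul ω0
  exact hf.comp t hu

namespace Suslov

/- `(x P Q s, y P Q s)` is `(P, Q)` rotated by the Gudermannian angle `gd s`, whose cosine and sine
are `1 / cosh s` and `tanh s`; since `gd' = 1 / cosh`, the pair rotates with that angular velocity. -/
noncomputable def x (P Q s : ℝ) : ℝ := (P - Q * sinh s) / cosh s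

noncomputable def y (P Q s : ℝ) : ℝ := (Q + P * sinh s) / cosh s

theorem hasDerivAt_add_mul_sinh_div_cosh (A B s : ℝ) :
    HasDerivAt (fun s => (A + B * sinh s) / cosh s) ((B - A * sinh s) / cosh s ^ 2) s := by
  have h := (((hasDerivAt_sinh s).const_mul B).const_add A).div (hasDerivAt_cosh s)
    (cosh_pos s).ne'
  refine h.congr_deriv ?_
  congr 1
  linear_combination B * cosh_sq s

theorem hasDerivAt_x (P Q s : ℝ) : HasDerivAt (x P Q) (-y P Q s / cosh s) s := by
  have h := hasDerivAt_add_mul_sinh_div_cosh P (-Q) s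
  simp only [neg_mul, ← sub_eq_add_neg] at h
  refine h.congr_deriv ?_
  rw [y]
  ring

theorem hasDerivAt_y (P Q s : ℝ) : HasDerivAt (y P Q) (x P Q s / cosh s) s :=
  (hasDerivAt_add_mul_sinh_div_cosh Q P s).congr_deriv (by rw [x]; ring)

theorem mul_x_add_mul_y (P Q s : ℝ) : P * x P Q s + Q * y P Q s = (P ^ 2 + Q ^ 2) / cosh s := by
  rw [x, y]
  ring

theorem hasDerivAt_reduced_suslov_of_rotation {ω1 ω2 : ℝ → ℝ} {a b I13 I23 ω0 t0 c : ℝ}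
    (ha : a ≠ 0) (hb : b ≠ 0) (hc : c = ω0 * a * b / ((b * I13) ^ 2 + (a * I23) ^ 2))
    (hω1 : ω1 = fun t => c * b * x (b * I13) (a * I23) (ω0 * (t - t0)))
    (hω2 : ω2 = fun t => c * a * y (b * I13) (a * I23) (ω0 * (t - t0))) (t : ℝ) :
    HasDerivAt ω1 (-ω2 t * (I13 * ω1 t + I23 * ω2 t) / a ^ 2) t ∧
      HasDerivAt ω2 (ω1 t * (I13 * ω1 t + I23 * ω2 t) / b ^ 2) t := by
  set D := (b * I13) ^ 2 + (a * I23) ^ 2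
  -- `c D = ω₀ a b` unless `D = 0`, where the junk value `c = 0` makes both sides vanish.
  have hcD : c * (c * D) = c * (ω0 * a * b) := by
    rcases eq_or_ne D 0 with hD | hD
    · simp [hc, hD]
    · rw [hc, div_mul_cancel₀ _ hD]
  subst hω1 hω2
  set u := ω0 * (t - t0)
  have hmomentum : I13 * (c * b * x (b * I13) (a * I23) u) + I23 * (c * a * y (b * I13) (a * I23) u)
      = c * D / cosh u := by
    rw [mul_div_assoc, ← mul_x_add_mul_y]
    ring
  rw [hmomentum]
  constructor
  · refine ((hasDerivAt_x _ _ u).comp_mul_sub_const.const_mul (c * b)).congr_deriv ?_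
    field_simp
    linear_combination y (b * I13) (a * I23) u * hcD
  · refine ((hasDerivAt_y _ _ u).comp_mul_sub_const.const_mul (c * a)).congr_deriv ?_
    field_simp
    linear_combination -x (b * I13) (a * I23) u * hcD

end Suslov

theorem suslov_reduced_explicit_solution_general
    (I11 I22 I13 I23 ω0 t0 : ℝ) (hI11 : 0 < I11) (hI22 : 0 < I22)
    (ω1 ω2 : ℝ → ℝ)
    (hω1 : ω1 = fun t =>
      ω0 * (Real.sqrt I11 * I22 / (I22 * I13 ^ 2 + I11 * I23 ^ 2)) *
        ((2 * Real.sqrt I22 * I13 - Real.sqrt I11 * I23 *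
            (Real.exp (ω0 * (t - t0)) - Real.exp (-(ω0 * (t - t0))))) /
          (Real.exp (ω0 * (t - t0)) + Real.exp (-(ω0 * (t - t0))))))
    (hω2 : ω2 = fun t =>
      ω0 * (I11 * Real.sqrt I22 / (I22 * I13 ^ 2 + I11 * I23 ^ 2)) *
        ((2 * Real.sqrt I11 * I23 + Real.sqrt I22 * I13 *
            (Real.exp (ω0 * (t - t0)) - Real.exp (-(ω0 * (t - t0))))) /
          (Real.exp (ω0 * (t - t0)) + Real.exp (-(ω0 * (t - t0)))))) :
    ∀ t, HasDerivAt ω1 (-ω2 t * (I13 * ω1 t + I23 * ω2 t) / I11) t ∧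
         HasDerivAt ω2 (ω1 t * (I13 * ω1 t + I23 * ω2 t) / I22) t := by
  set a := √I11
  set b := √I22
  have ha : a ^ 2 = I11 := sq_sqrt hI11.le
  have hb : b ^ 2 = I22 := sq_sqrt hI22.le
  set c := ω0 * a * b / ((b * I13) ^ 2 + (a * I23) ^ 2) with hc
  have hω1 : ω1 = fun t => c * b * Suslov.x (b * I13) (a * I23) (ω0 * (t - t0)) := by
    ext t
    rw [hω1, hc, Suslov.x, sinh_eq, cosh_eq, ← ha, ← hb]
    field_simp
  have hω2 : ω2 = fun t => c * a * Suslov.y (b * I13) (a * I23) (ω0 * (t - t0)) := by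
    ext t
    rw [hω2, hc, Suslov.y, sinh_eq, cosh_eq, ← ha, ← hb]
    field_simp
  rw [← ha, ← hb]
  exact Suslov.hasDerivAt_reduced_suslov_of_rotation (sqrt_pos.mpr hI11).ne'
    (sqrt_pos.mpr hI22).ne' hc hω1 hω2

/-- The explicit hyperbolic-function formulas solve the reduced Suslov system. -/
theorem suslov_reduced_explicit_solution
    (I11 I22 I13 I23 ω0 t0 : ℝ) (hI11 : 0 < I11) (hI22 : 0 < I22)
    (hI : ¬(I13 = 0 ∧ I23 = 0))
    (ω1 ω2 : ℝ → ℝ)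
    (hω1 : ω1 = fun t =>
      ω0 * (Real.sqrt I11 * I22 / (I22 * I13 ^ 2 + I11 * I23 ^ 2)) *
        ((2 * Real.sqrt I22 * I13 - Real.sqrt I11 * I23 *
            (Real.exp (ω0 * (t - t0)) - Real.exp (-(ω0 * (t - t0))))) /
          (Real.exp (ω0 * (t - t0)) + Real.exp (-(ω0 * (t - t0))))))
    (hω2 : ω2 = fun t =>
      ω0 * (I11 * Real.sqrt I22 / (I22 * I13 ^ 2 + I11 * I23 ^ 2)) *
        ((2 * Real.sqrt I11 * I23 + Real.sqrt I22 * I13 *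
            (Real.exp (ω0 * (t - t0)) - Real.exp (-(ω0 * (t - t0))))) /
          (Real.exp (ω0 * (t - t0)) + Real.exp (-(ω0 * (t - t0)))))) :
    ∀ t, HasDerivAt ω1 (-ω2 t * (I13 * ω1 t + I23 * ω2 t) / I11) t ∧
         HasDerivAt ω2 (ω1 t * (I13 * ω1 t + I23 * ω2 t) / I22) t :=
  suslov_reduced_explicit_solution_general I11 I22 I13 I23 ω0 t0 hI11 hI22 ω1 ω2 hω1 hω2
end

section
/- The energy of the explicit solution of the reduced Suslov system satisfies E = ½(I₁₁ω₁(t)² + I₂₂ω₂(t)²) = h for all t, where ω₀² = 2(I₂₂I₁₃² + I₁₁I₂₃²)h/(I₁₁²I₂₂²). -/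
/-- The explicit solution of the reduced Suslov system lies on the energy level
`E = h` when `ω₀² = 2(I₂₂I₁₃² + I₁₁I₂₃²)h/(I₁₁²I₂₂²)`. -/
theorem suslov_reduced_explicit_solution_energy
    (I11 I22 I13 I23 ω0 t0 h : ℝ) (hI11 : 0 < I11) (hI22 : 0 < I22)
    (hI : ¬(I13 = 0 ∧ I23 = 0)) (hh : 0 ≤ h)
    (hω0 : ω0 ^ 2 = 2 * (I22 * I13 ^ 2 + I11 * I23 ^ 2) * h / (I11 ^ 2 * I22 ^ 2))
    (ω1 ω2 : ℝ → ℝ)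
    (hω1 : ω1 = fun t =>
      ω0 * (Real.sqrt I11 * I22 / (I22 * I13 ^ 2 + I11 * I23 ^ 2)) *
        ((2 * Real.sqrt I22 * I13 - Real.sqrt I11 * I23 *
            (Real.exp (ω0 * (t - t0)) - Real.exp (-(ω0 * (t - t0))))) /
          (Real.exp (ω0 * (t - t0)) + Real.exp (-(ω0 * (t - t0))))))
    (hω2 : ω2 = fun t =>
      ω0 * (I11 * Real.sqrt I22 / (I22 * I13 ^ 2 + I11 * I23 ^ 2)) *
        ((2 * Real.sqrt I11 * I23 + Real.sqrt I22 * I13 *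
            (Real.exp (ω0 * (t - t0)) - Real.exp (-(ω0 * (t - t0))))) /
          (Real.exp (ω0 * (t - t0)) + Real.exp (-(ω0 * (t - t0)))))) :
    ∀ t, (1 / 2) * (I11 * ω1 t ^ 2 + I22 * ω2 t ^ 2) = h := by
  intro t
  subst hω1 hω2
  simp only
  set a := Real.sqrt I11 with ha'
  set b := Real.sqrt I22 with hb'
  have ha : a ^ 2 = I11 := Real.sq_sqrt hI11.le
  have hb : b ^ 2 = I22 := Real.sq_sqrt hI22.le
  set E1 := Real.exp (ω0 * (t - t0)) with hE1'
  set E2 := Real.exp (-(ω0 * (t - t0))) with hE2'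
  have hE : E1 * E2 = 1 := by rw [hE1', hE2', ← Real.exp_add]; simp
  have hE1 : 0 < E1 := Real.exp_pos _
  have hE2 : 0 < E2 := Real.exp_pos _
  have hD : 0 < I22 * I13 ^ 2 + I11 * I23 ^ 2 := by
    rcases not_and_or.mp hI with h13 | h23 <;> positivity
  have hc : 0 < E1 + E2 := by linarith
  rw [eq_div_iff (by positivity)] at hω0
  field_simp
  linear_combination
    (ω0^2*I11*I22^2*(2*b*I13 - a*I23*(E1-E2))^2 + 2*(I22*I13^2+I11*I23^2)*h*I23^2*(4+(E1-E2)^2)) * ha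
    + (ω0^2*I11^2*I22*(2*a*I23 + b*I13*(E1-E2))^2 + 2*(I22*I13^2+I11*I23^2)*h*I13^2*(4+(E1-E2)^2)) * hb
    + (-8*(I22*I13^2+I11*I23^2)^2*h) * hE
    + ((2*b*I13 - a*I23*(E1-E2))^2 + (2*a*I23 + b*I13*(E1-E2))^2) * hω0
end

section
/- Under the conditions I₁₃ = 0, I₂₃² = I₂₂(I₁₁ − I₂₂), b₁ = 0, and I₂₂b₂ + I₂₃b₃ = 0, the function F₂ = I₁₁γ₁ω₁ + (I₂₂γ₂ + I₂₃γ₃)ω₂ is a first integral of the Suslov system with gravity: its time derivative along solutions vanishes identically. -/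
/-!
Once `I₁₃ = b₁ = 0`, the product rule gives, along the flow,
`I₂₂ · dF₂/dt = γ₃ω₁ω₂ (I₂₃² − I₂₂(I₁₁ − I₂₂)) − γ₁γ₃ (I₂₂b₂ + I₂₃b₃)`,
and both brackets vanish by the remaining two conditions.
-/

lemma pos_of_sq_eq_mul_sub {a b c : ℝ} (hb : 0 < b) (h : c ^ 2 = b * (a - b)) : 0 < a := by
  nlinarith [sq_nonneg c]

lemma HasDerivAt.suslov_area_integral {I11 I22 I23 : ℝ} {ω1 ω2 γ1 γ2 γ3 : ℝ → ℝ}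
    {ω1' ω2' γ1' γ2' γ3' t : ℝ} (h1 : HasDerivAt ω1 ω1' t) (h2 : HasDerivAt ω2 ω2' t)
    (h3 : HasDerivAt γ1 γ1' t) (h4 : HasDerivAt γ2 γ2' t) (h5 : HasDerivAt γ3 γ3' t) :
    HasDerivAt (fun s => I11 * γ1 s * ω1 s + (I22 * γ2 s + I23 * γ3 s) * ω2 s)
      (I11 * γ1' * ω1 t + I11 * γ1 t * ω1' +
        ((I22 * γ2' + I23 * γ3') * ω2 t + (I22 * γ2 t + I23 * γ3 t) * ω2')) t :=
  ((h3.const_mul I11).mul h1).add (((h4.const_mul I22).add (h5.const_mul I23)).mul h2)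

lemma suslov_area_integral_rate_eq_zero {I11 I22 I13 I23 b1 b2 b3 : ℝ}
    (hI11 : I11 ≠ 0) (hI22 : I22 ≠ 0) (hc1 : I13 = 0) (hc2 : I23 ^ 2 = I22 * (I11 - I22))
    (hc3 : b1 = 0) (hc4 : I22 * b2 + I23 * b3 = 0) (ω1 ω2 γ1 γ2 γ3 : ℝ) :
    I11 * (-γ3 * ω2) * ω1
      + I11 * γ1 * ((-ω2 * (I13 * ω1 + I23 * ω2) + b3 * γ2 - b2 * γ3) / I11)
      + ((I22 * (γ3 * ω1) + I23 * (γ1 * ω2 - γ2 * ω1)) * ω2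
      + (I22 * γ2 + I23 * γ3) * ((ω1 * (I13 * ω1 + I23 * ω2) + b1 * γ3 - b3 * γ1) / I22))
      = 0 := by
  subst hc1 hc3
  field_simp
  linear_combination (γ3 * ω1 * ω2) * hc2 - (γ1 * γ3) * hc4

theorem suslov_hess_area_integral_general
    (I11 I22 I13 I23 b1 b2 b3 : ℝ) (hI22 : 0 < I22)
    (hc1 : I13 = 0) (hc2 : I23 ^ 2 = I22 * (I11 - I22))
    (hc3 : b1 = 0) (hc4 : I22 * b2 + I23 * b3 = 0)
    (ω1 ω2 γ1 γ2 γ3 : ℝ → ℝ)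
    (h1 : ∀ t, HasDerivAt ω1
      ((-ω2 t * (I13 * ω1 t + I23 * ω2 t) + b3 * γ2 t - b2 * γ3 t) / I11) t)
    (h2 : ∀ t, HasDerivAt ω2
      ((ω1 t * (I13 * ω1 t + I23 * ω2 t) + b1 * γ3 t - b3 * γ1 t) / I22) t)
    (h3 : ∀ t, HasDerivAt γ1 (-(γ3 t) * ω2 t) t)
    (h4 : ∀ t, HasDerivAt γ2 (γ3 t * ω1 t) t)
    (h5 : ∀ t, HasDerivAt γ3 (γ1 t * ω2 t - γ2 t * ω1 t) t) :
    ∀ t, HasDerivAt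
      (fun s => I11 * γ1 s * ω1 s + (I22 * γ2 s + I23 * γ3 s) * ω2 s) 0 t := by
  intro t
  have hI11 : 0 < I11 := pos_of_sq_eq_mul_sub hI22 hc2
  have hF := (h1 t).suslov_area_integral (h2 t) (h3 t) (h4 t) (h5 t)
    (I11 := I11) (I22 := I22) (I23 := I23)
  rwa [suslov_area_integral_rate_eq_zero hI11.ne' hI22.ne' hc1 hc2 hc3 hc4] at hF

/-- Under the Hess-type conditions, `F₂ = I₁₁γ₁ω₁ + (I₂₂γ₂ + I₂₃γ₃)ω₂` is a first
integral of the Suslov system with gravity. -/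
theorem suslov_hess_area_integral
    (I11 I22 I13 I23 b1 b2 b3 : ℝ) (hI11 : 0 < I11) (hI22 : 0 < I22)
    (hc1 : I13 = 0) (hc2 : I23 ^ 2 = I22 * (I11 - I22))
    (hc3 : b1 = 0) (hc4 : I22 * b2 + I23 * b3 = 0)
    (ω1 ω2 γ1 γ2 γ3 : ℝ → ℝ)
    (h1 : ∀ t, HasDerivAt ω1
      ((-ω2 t * (I13 * ω1 t + I23 * ω2 t) + b3 * γ2 t - b2 * γ3 t) / I11) t)
    (h2 : ∀ t, HasDerivAt ω2
      ((ω1 t * (I13 * ω1 t + I23 * ω2 t) + b1 * γ3 t - b3 * γ1 t) / I22) t)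
    (h3 : ∀ t, HasDerivAt γ1 (-(γ3 t) * ω2 t) t)
    (h4 : ∀ t, HasDerivAt γ2 (γ3 t * ω1 t) t)
    (h5 : ∀ t, HasDerivAt γ3 (γ1 t * ω2 t - γ2 t * ω1 t) t) :
    ∀ t, HasDerivAt
      (fun s => I11 * γ1 s * ω1 s + (I22 * γ2 s + I23 * γ3 s) * ω2 s) 0 t :=
  suslov_hess_area_integral_general I11 I22 I13 I23 b1 b2 b3 hI22 hc1 hc2 hc3 hc4 ω1 ω2 γ1 γ2 γ3 h1
    h2 h3 h4 h5
end

section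
/- In the Suslov problem with b = 0 and I₁₃ = 0, I₁₁I₂₂ = I₂₂² + I₂₃² (the case n = 1), the first integral F₂ = I₁₁γ₁ω₁ + (I₂₂γ₂ + I₂₃γ₃)ω₂ has vanishing time derivative along all solutions of the full Suslov system. -/
/-! Differentiating `F₂` along the flow, the `γ₂ω₁ω₂` terms cancel and what is left is
`γ₃ω₁ω₂ (I₂₂² + I₂₃² − I₁₁I₂₂) / I₂₂`, which vanishes on the `n = 1` surface
`I₁₁I₂₂ = I₂₂² + I₂₃²`. -/

lemma suslov_F2_lie_derivative_eq {I11 I22 I23 : ℝ} (hI11 : I11 ≠ 0) (hI22 : I22 ≠ 0)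
    (ω1 ω2 γ1 γ2 γ3 : ℝ) :
    I11 * (-γ3 * ω2) * ω1 + I11 * γ1 * (-ω2 * (I23 * ω2) / I11) +
        ((I22 * (γ3 * ω1) + I23 * (γ1 * ω2 - γ2 * ω1)) * ω2 +
          (I22 * γ2 + I23 * γ3) * (ω1 * (I23 * ω2) / I22)) =
      γ3 * ω1 * ω2 * (I22 ^ 2 + I23 ^ 2 - I11 * I22) / I22 := by
  field_simp
  ring

/-- In the Suslov problem with `b = 0`, `I₁₃ = 0`, `I₁₁I₂₂ = I₂₂² + I₂₃²`, the
function `F₂ = I₁₁γ₁ω₁ + (I₂₂γ₂ + I₂₃γ₃)ω₂` is a first integral. -/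
theorem suslov_free_case_n1_integral
    (I11 I22 I23 : ℝ) (hI11 : 0 < I11) (hI22 : 0 < I22)
    (hc : I11 * I22 = I22 ^ 2 + I23 ^ 2)
    (ω1 ω2 γ1 γ2 γ3 : ℝ → ℝ)
    (h1 : ∀ t, HasDerivAt ω1 (-ω2 t * (I23 * ω2 t) / I11) t)
    (h2 : ∀ t, HasDerivAt ω2 (ω1 t * (I23 * ω2 t) / I22) t)
    (h3 : ∀ t, HasDerivAt γ1 (-(γ3 t) * ω2 t) t)
    (h4 : ∀ t, HasDerivAt γ2 (γ3 t * ω1 t) t)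
    (h5 : ∀ t, HasDerivAt γ3 (γ1 t * ω2 t - γ2 t * ω1 t) t) :
    ∀ t, HasDerivAt
      (fun s => I11 * γ1 s * ω1 s + (I22 * γ2 s + I23 * γ3 s) * ω2 s) 0 t := by
  intro t
  have hF := (((h3 t).const_mul I11).mul (h1 t)).add
    ((((h4 t).const_mul I22).add ((h5 t).const_mul I23)).mul (h2 t))
  rw [Pi.add_apply, suslov_F2_lie_derivative_eq hI11.ne' hI22.ne', ← hc, sub_self, mul_zero,
    zero_div] at hF
  exact hF
end

section
/- Let v be the vector field of the Hess–Suslov system ẇ₁ = −aw₂² − bn₂, ẇ₂ = aw₁w₂ + bn₁, ṅ₁ = −(an₂ + n₃)w₂, ṅ₂ = aw₂n₁ + w₁n₃, ṅ₃ = n₁w₂ − n₂w₁, and let u = −w₂ ∂/∂w₁ + w₁ ∂/∂w₂ − n₂ ∂/∂n₁ + n₁ ∂/∂n₂. Then the Lie bracket satisfies [u, v] = a·w₁·u. In particular, u is a symmetry field of v only where a·w₁ = 0. -/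
set_option maxHeartbeats 1000000

/-- The Lie bracket of the rotation field `u` with the Hess–Suslov vector field
`v` satisfies `[u, v] = a w₁ u`. -/
theorem hess_suslov_symmetry_bracket (a b : ℝ)
    (v u : (Fin 5 → ℝ) → (Fin 5 → ℝ))
    (hv : v = fun x => ![-a * x 1 ^ 2 - b * x 3,
                          a * x 0 * x 1 + b * x 2,
                          -(a * x 3 + x 4) * x 1,
                          a * x 1 * x 2 + x 0 * x 4,
                          x 2 * x 1 - x 3 * x 0])
    (hu : u = fun x => ![-x 1, x 0, -x 3, x 2, 0]) :
    ∀ x : Fin 5 → ℝ,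
      fderiv ℝ v x (u x) - fderiv ℝ u x (v x) = (a * x 0) • u x := by
  subst hv hu
  intro x
  set P : Fin 5 → (Fin 5 → ℝ) →L[ℝ] ℝ := fun i => ContinuousLinearMap.proj i with hP
  have hp : ∀ i, HasFDerivAt (fun y : Fin 5 → ℝ => y i) (P i) x := fun i => hasFDerivAt_apply i x
  have hv' : HasFDerivAt (fun x : Fin 5 → ℝ =>
      (![-a * x 1 ^ 2 - b * x 3,
         a * x 0 * x 1 + b * x 2,
         -(a * x 3 + x 4) * x 1,
         a * x 1 * x 2 + x 0 * x 4,
         x 2 * x 1 - x 3 * x 0] : Fin 5 → ℝ))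
      (ContinuousLinearMap.pi
        ![(-(a * (2 * x 1))) • P 1 - b • P 3,
          (a * x 1) • P 0 + (a * x 0) • P 1 + b • P 2,
          (-(a * x 3 + x 4)) • P 1 + (-(a * x 1)) • P 3 + (-(x 1)) • P 4,
          x 4 • P 0 + (a * x 2) • P 1 + (a * x 1) • P 2 + x 0 • P 4,
          (-(x 3)) • P 0 + x 2 • P 1 + x 1 • P 2 + (-(x 0)) • P 3]) x := by
    apply hasFDerivAt_pi.2
    intro i
    fin_cases i <;>
      simp only [Matrix.cons_val_zero, Matrix.cons_val_one, Matrix.head_cons,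
        Matrix.cons_val_two, Matrix.tail_cons, Matrix.cons_val_three, Matrix.cons_val_four,
        Matrix.cons_val_fin_one]
    · simp only [pow_two]
      exact ((((hp 1).mul (hp 1)).const_mul (-a)).sub ((hp 3).const_mul b)).congr_fderiv
        (by ext y; simp [hP]; ring)
    · exact ((((hp 0).const_mul a).mul (hp 1)).add ((hp 2).const_mul b)).congr_fderiv
        (by ext y; simp [hP]; ring)
    · exact (((((hp 3).const_mul a).add (hp 4)).neg.mul (hp 1))).congr_fderiv
        (by ext y; simp [hP]; ring)
    · exact ((((hp 1).const_mul a).mul (hp 2)).add ((hp 0).mul (hp 4))).congr_fderiv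
        (by ext y; simp [hP]; ring)
    · exact (((hp 2).mul (hp 1)).sub ((hp 3).mul (hp 0))).congr_fderiv
        (by ext y; simp [hP]; ring)
  have hu' : HasFDerivAt (fun x : Fin 5 → ℝ => (![-x 1, x 0, -x 3, x 2, 0] : Fin 5 → ℝ))
      (ContinuousLinearMap.pi ![-P 1, P 0, -P 3, P 2, 0]) x := by
    apply hasFDerivAt_pi.2
    intro i
    fin_cases i <;>
      simp only [Matrix.cons_val_zero, Matrix.cons_val_one, Matrix.head_cons,
        Matrix.cons_val_two, Matrix.tail_cons, Matrix.cons_val_three, Matrix.cons_val_four,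
        Matrix.cons_val_fin_one]
    · exact (hp 1).neg
    · exact hp 0
    · exact (hp 3).neg
    · exact hp 2
    · exact hasFDerivAt_const 0 x
  rw [hv'.fderiv, hu'.fderiv]
  funext i
  fin_cases i <;>
    simp [hP, ContinuousLinearMap.pi_apply] <;> ring
end

section
/- On the common level set E = h, F₁ = 1, F₂ = f of the Hess–Suslov system with b = 1, parameterized by w₁ = √(2(h + n₃)) sin φ, w₂ = √(2(h + n₃)) cos φ, the variable n₃ satisfies ṅ₃² = 2(h + n₃)(1 − n₃²) − f². -/
/-- On the common level set `E = h`, `F₁ = 1`, `F₂ = f` of the Hess–Suslov system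
with `b = 1`, the variable `n₃` satisfies `ṅ₃² = 2(h + n₃)(1 - n₃²) - f²`. -/
theorem hess_suslov_gyroscopic_equation (a h f : ℝ)
    (w1 w2 n1 n2 n3 : ℝ → ℝ)
    (h1 : ∀ t, HasDerivAt w1 (-a * w2 t ^ 2 - n2 t) t)
    (h2 : ∀ t, HasDerivAt w2 (a * w1 t * w2 t + n1 t) t)
    (h3 : ∀ t, HasDerivAt n1 (-(a * n2 t + n3 t) * w2 t) t)
    (h4 : ∀ t, HasDerivAt n2 (a * w2 t * n1 t + w1 t * n3 t) t)
    (h5 : ∀ t, HasDerivAt n3 (n1 t * w2 t - n2 t * w1 t) t)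
    (hE : ∀ t, (1 / 2) * (w1 t ^ 2 + w2 t ^ 2) - n3 t = h)
    (hF1 : ∀ t, n1 t ^ 2 + n2 t ^ 2 + n3 t ^ 2 = 1)
    (hF2 : ∀ t, w1 t * n1 t + w2 t * n2 t = f)
    (hpos : ∀ t, 0 < h + n3 t) :
    ∀ t, (deriv n3 t) ^ 2 = 2 * (h + n3 t) * (1 - n3 t ^ 2) - f ^ 2 := by
  intro t
  rw [(h5 t).deriv]
  have e1 := hE t
  have e2 := hF1 t
  have e3 := hF2 t
  linear_combination 2 * (1 - n3 t ^ 2) * e1 + (w1 t ^ 2 + w2 t ^ 2) * e2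
    - (f + w1 t * n1 t + w2 t * n2 t) * e3
end

section
/- For the Chaplygin ball with Suslov constraint and b = 0, on the invariant manifold N = {I₁₃ω₁ + I₂₃ω₂ = 0} the angular velocities ω₁ and ω₂ are constant along solutions: if a solution satisfies I₁₃ω₁(0) + I₂₃ω₂(0) = 0, then ω₁' = ω₂' = 0 for all time. -/
/-!
Write `f = I₁₃ω₁ + I₂₃ω₂`. The mass matrix `Î(γ)` has positive determinant and the right-hand side
is a multiple of `f`, so by Cramer's rule `ω₁'` and `ω₂'` are continuous multiples of `f`; hence
`f' = k f` for a continuous `k`. With the integrating factor `exp (-∫₀ᵗ k)` this forces `f ≡ 0` once `f 0 = 0`,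
and then `ω₁' = ω₂' = 0`.
-/

open Real

theorem eq_zero_of_hasDerivAt_smul_self {E : Type*} [NormedAddCommGroup E] [NormedSpace ℝ E]
    {f : ℝ → E} {k : ℝ → ℝ} (hk : Continuous k) (hf : ∀ t, HasDerivAt f (k t • f t) t)
    (h0 : f 0 = 0) (t : ℝ) : f t = 0 := by
  set K : ℝ → ℝ := fun u => ∫ x in (0 : ℝ)..u, k x
  have hK : ∀ u, HasDerivAt K (k u) u := fun u => (hk.integral_hasStrictDerivAt 0 u).hasDerivAt
  have hg : ∀ u, HasDerivAt (fun u => exp (-K u) • f u) 0 u := by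
    intro u
    refine ((hK u).neg.exp.smul (hf u)).congr_deriv ?_
    rw [smul_smul, ← add_smul]
    simp
  have hconst := is_const_of_deriv_eq_zero (fun u => (hg u).differentiableAt)
    (fun u => (hg u).deriv) t 0
  simpa [h0, (exp_pos _).ne'] using hconst

theorem symm_linear_system_solution {a b c x y r s : ℝ} (hdet : a * c - b * b ≠ 0)
    (h1 : a * x + b * y = r) (h2 : b * x + c * y = s) :
    x = (c * r - b * s) / (a * c - b * b) ∧ y = (a * s - b * r) / (a * c - b * b) := by
  constructor <;> rw [eq_div_iff hdet]
  · linear_combination c * h1 - b * h2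
  · linear_combination a * h2 - b * h1

theorem chaplygin_mass_matrix_det_pos {I11 I22 D : ℝ} (hI11 : 0 < I11) (hI22 : 0 < I22)
    (hD : 0 ≤ D) (γ1 γ2 γ3 : ℝ) :
    0 < (I11 + D * (γ2 ^ 2 + γ3 ^ 2)) * (I22 + D * (γ1 ^ 2 + γ3 ^ 2))
      - -(D * γ1 * γ2) * -(D * γ1 * γ2) := by
  have hcross : 0 ≤ D ^ 2 * (γ3 ^ 2 * (γ1 ^ 2 + γ2 ^ 2 + γ3 ^ 2)) := by positivity
  have hmixed : 0 ≤ D * (I11 * (γ1 ^ 2 + γ3 ^ 2) + I22 * (γ2 ^ 2 + γ3 ^ 2)) := by positivity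
  linarith [mul_pos hI11 hI22]

theorem chaplygin_ball_suslov_invariant_manifold_general
    (I11 I22 I13 I23 D : ℝ) (hI11 : 0 < I11) (hI22 : 0 < I22) (hD : 0 < D)
    (ω1 ω2 γ1 γ2 γ3 dω1 dω2 : ℝ → ℝ)
    (hd1 : ∀ t, HasDerivAt ω1 (dω1 t) t)
    (hd2 : ∀ t, HasDerivAt ω2 (dω2 t) t)
    (heq1 : ∀ t, (I11 + D * (γ2 t ^ 2 + γ3 t ^ 2)) * dω1 t
        + (-(D * γ1 t * γ2 t)) * dω2 t
      = -(I13 * ω1 t + I23 * ω2 t) * ω2 t)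
    (heq2 : ∀ t, (-(D * γ1 t * γ2 t)) * dω1 t
        + (I22 + D * (γ1 t ^ 2 + γ3 t ^ 2)) * dω2 t
      = (I13 * ω1 t + I23 * ω2 t) * ω1 t)
    (hγ1 : ∀ t, HasDerivAt γ1 (-(γ3 t) * ω2 t) t)
    (hγ2 : ∀ t, HasDerivAt γ2 (γ3 t * ω1 t) t)
    (hγ3 : ∀ t, HasDerivAt γ3 (γ1 t * ω2 t - γ2 t * ω1 t) t)
    (h0 : I13 * ω1 0 + I23 * ω2 0 = 0) :
    ∀ t, dω1 t = 0 ∧ dω2 t = 0 := by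
  set f : ℝ → ℝ := fun t => I13 * ω1 t + I23 * ω2 t
  set a : ℝ → ℝ := fun t => I11 + D * (γ2 t ^ 2 + γ3 t ^ 2)
  set b : ℝ → ℝ := fun t => -(D * γ1 t * γ2 t)
  set c : ℝ → ℝ := fun t => I22 + D * (γ1 t ^ 2 + γ3 t ^ 2)
  set p1 : ℝ → ℝ := fun t => -(c t * ω2 t + b t * ω1 t) / (a t * c t - b t * b t)
  set p2 : ℝ → ℝ := fun t => (a t * ω1 t + b t * ω2 t) / (a t * c t - b t * b t)
  have hdet (t : ℝ) : a t * c t - b t * b t ≠ 0 :=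
    (chaplygin_mass_matrix_det_pos hI11 hI22 hD.le _ _ _).ne'
  have hdω (t : ℝ) : dω1 t = p1 t * f t ∧ dω2 t = p2 t * f t := by
    obtain ⟨h1, h2⟩ := symm_linear_system_solution (hdet t) (heq1 t) (heq2 t)
    exact ⟨by rw [h1]; ring, by rw [h2]; ring⟩
  have hcont : Continuous (fun t => I13 * p1 t + I23 * p2 t) := by
    have hγ1c : Continuous γ1 := Differentiable.continuous fun t => (hγ1 t).differentiableAt
    have hγ2c : Continuous γ2 := Differentiable.continuous fun t => (hγ2 t).differentiableAt
    have hγ3c : Continuous γ3 := Differentiable.continuous fun t => (hγ3 t).differentiableAt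
    have hω1c : Continuous ω1 := Differentiable.continuous fun t => (hd1 t).differentiableAt
    have hω2c : Continuous ω2 := Differentiable.continuous fun t => (hd2 t).differentiableAt
    have hp1 : Continuous p1 := Continuous.div (by fun_prop) (by fun_prop) hdet
    have hp2 : Continuous p2 := Continuous.div (by fun_prop) (by fun_prop) hdet
    fun_prop
  have hf (t : ℝ) : HasDerivAt f ((I13 * p1 t + I23 * p2 t) • f t) t := by
    refine (((hd1 t).const_mul I13).add ((hd2 t).const_mul I23)).congr_deriv ?_
    rw [(hdω t).1, (hdω t).2, smul_eq_mul]
    ring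
  intro t
  simp [hdω t, eq_zero_of_hasDerivAt_smul_self hcont hf h0 t]

/-- For the Chaplygin ball with Suslov constraint and `b = 0`, on the invariant
manifold `I₁₃ω₁ + I₂₃ω₂ = 0` the angular velocities are constant. -/
theorem chaplygin_ball_suslov_invariant_manifold
    (I11 I22 I13 I23 D : ℝ) (hI11 : 0 < I11) (hI22 : 0 < I22) (hD : 0 < D)
    (hI : ¬(I13 = 0 ∧ I23 = 0))
    (ω1 ω2 γ1 γ2 γ3 dω1 dω2 : ℝ → ℝ)
    (hd1 : ∀ t, HasDerivAt ω1 (dω1 t) t)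
    (hd2 : ∀ t, HasDerivAt ω2 (dω2 t) t)
    (heq1 : ∀ t, (I11 + D * (γ2 t ^ 2 + γ3 t ^ 2)) * dω1 t
        + (-(D * γ1 t * γ2 t)) * dω2 t
      = -(I13 * ω1 t + I23 * ω2 t) * ω2 t)
    (heq2 : ∀ t, (-(D * γ1 t * γ2 t)) * dω1 t
        + (I22 + D * (γ1 t ^ 2 + γ3 t ^ 2)) * dω2 t
      = (I13 * ω1 t + I23 * ω2 t) * ω1 t)
    (hγ1 : ∀ t, HasDerivAt γ1 (-(γ3 t) * ω2 t) t)
    (hγ2 : ∀ t, HasDerivAt γ2 (γ3 t * ω1 t) t)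
    (hγ3 : ∀ t, HasDerivAt γ3 (γ1 t * ω2 t - γ2 t * ω1 t) t)
    (h0 : I13 * ω1 0 + I23 * ω2 0 = 0) :
    ∀ t, dω1 t = 0 ∧ dω2 t = 0 :=
  chaplygin_ball_suslov_invariant_manifold_general I11 I22 I13 I23 D hI11 hI22 hD ω1 ω2 γ1 γ2 γ3 dω1
    dω2 hd1 hd2 heq1 heq2 hγ1 hγ2 hγ3 h0
end
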